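/- Along any gradient flow of the diagonal linear network loss, for each coordinate i the three quantities u_{+,i}(t)·u_{−,i}(t) + v_{+,i}(t)·v_{−,i}(t), v_{+,i}(t)² − u_{+,i}(t)², and v_{−,i}(t)² − u_{−,i}(t)² are constant in t (equal to their values at t = 0). -/

import Mathlib

/-!
Write `w = u₊ ∘ v₊ - u₋ ∘ v₋` for the linear predictor of the network and `cᵢ` for the
correlation of its residual with the `i`-th feature. By the chain rule the flow reads
`u̇₊ᵢ = cᵢ v₊ᵢ`, `v̇₊ᵢ = cᵢ u₊ᵢ`, `u̇₋ᵢ = -cᵢ v₋ᵢ`, `v̇₋ᵢ = -cᵢ u₋ᵢ`: both pairs `(uᵢ, vᵢ)` are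
driven by the same scalar `±cᵢ` with the roles of `u` and `v` swapped, and the three
quantities have derivative zero for that reason alone.
-/

/-- The square loss of the two-layer diagonal linear network with untied weights:
`L(u₊,u₋,v₊,v₋) = (1/(2N)) Σₙ (yⁿ − (u₊∘v₊ − u₋∘v₋)ᵀxⁿ)²`. -/
noncomputable def diagLoss {d N : ℕ} (X : Fin N → EuclideanSpace ℝ (Fin d))
    (y : Fin N → ℝ) (uP uM vP vM : EuclideanSpace ℝ (Fin d)) : ℝ :=
  1 / (2 * N) * ∑ n, (y n - ∑ i, (uP i * vP i - uM i * vM i) * X n i) ^ 2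

open InnerProductSpace Finset

theorem hasGradientAt_sum_sq_sub_inner {ι E : Type*} [NormedAddCommGroup E]
    [InnerProductSpace ℝ E] [CompleteSpace E] (s : Finset ι) (c : ℝ) (a : ι → E) (b : ι → ℝ)
    (x : E) :
    HasGradientAt (fun u => c * ∑ n ∈ s, (b n - ⟪a n, u⟫_ℝ) ^ 2)
      (-(2 * c) • ∑ n ∈ s, (b n - ⟪a n, x⟫_ℝ) • a n) x := by
  have hterm : ∀ n ∈ s, HasFDerivAt (fun u => (b n - ⟪a n, u⟫_ℝ) ^ 2)
      ((2 * (b n - ⟪a n, x⟫_ℝ)) • -innerSL ℝ (a n)) x := by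
    intro n _
    simpa using (((innerSL ℝ (a n)).hasFDerivAt.const_sub (b n)).pow 2)
  rw [hasGradientAt_iff_hasFDerivAt]
  refine ((HasFDerivAt.fun_sum hterm).const_mul c).congr_fderiv ?_
  ext v
  simp only [FunLike.coe_smul, FunLike.coe_sum, Pi.smul_apply,
    Finset.sum_apply, toDual_apply_apply, sum_inner, inner_smul_left, smul_eq_mul, mul_sum]
  refine sum_congr rfl fun n _ => ?_
  simp only [neg_apply, innerSL_apply_apply, conj_trivial, real_inner_comm x]
  ring

noncomputable def residualCorr {d N : ℕ} (X : Fin N → EuclideanSpace ℝ (Fin d)) (y : Fin N → ℝ)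
    (w : Fin d → ℝ) (i : Fin d) : ℝ :=
  1 / N * ∑ n, (y n - ∑ j, w j * X n j) * X n i

section

variable {d N : ℕ} (X : Fin N → EuclideanSpace ℝ (Fin d)) (y : Fin N → ℝ)

theorem gradient_diagLoss_uP_apply (uP uM vP vM : EuclideanSpace ℝ (Fin d)) (i : Fin d) :
    gradient (fun u => diagLoss X y u uM vP vM) uP i =
      -(residualCorr X y (fun j => uP j * vP j - uM j * vM j) i * vP i) := by
  set a : Fin N → EuclideanSpace ℝ (Fin d) := fun n => WithLp.toLp 2 (fun j => vP j * X n j)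
  set b : Fin N → ℝ := fun n => y n + ∑ j, uM j * vM j * X n j
  have hloss : (fun u => diagLoss X y u uM vP vM) =
      fun u => 1 / (2 * N) * ∑ n, (b n - ⟪a n, u⟫_ℝ) ^ 2 := by
    funext u
    simp only [diagLoss, a, b, PiLp.inner_apply, RCLike.inner_apply, conj_trivial]
    congr! 3 with n
    simp only [sub_mul, sum_sub_distrib, mul_assoc]
    ring
  rw [hloss, (hasGradientAt_sum_sq_sub_inner _ _ a b uP).gradient]
  simp only [a, b, residualCorr, PiLp.smul_apply, WithLp.ofLp_sum, Finset.sum_apply,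
    PiLp.inner_apply, RCLike.inner_apply, conj_trivial, smul_eq_mul, mul_sum, sum_mul,
    ← sum_neg_distrib]
  refine sum_congr rfl fun n _ => ?_
  simp only [sub_mul, sum_sub_distrib, mul_assoc]
  ring

theorem diagLoss_congr {uP uM vP vM uP' uM' vP' vM' : EuclideanSpace ℝ (Fin d)}
    (h : ∀ j, uP j * vP j - uM j * vM j = uP' j * vP' j - uM' j * vM' j) :
    diagLoss X y uP uM vP vM = diagLoss X y uP' uM' vP' vM' := by
  simp only [diagLoss, h]

theorem gradient_diagLoss_uM_apply (uP uM vP vM : EuclideanSpace ℝ (Fin d)) (i : Fin d) :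
    gradient (fun u => diagLoss X y uP u vP vM) uM i =
      residualCorr X y (fun j => uP j * vP j - uM j * vM j) i * vM i := by
  have hswap : (fun u => diagLoss X y uP u vP vM) = fun u => diagLoss X y u uP (-vM) (-vP) :=
    funext fun u => diagLoss_congr X y fun j => by simp only [PiLp.neg_apply]; ring
  rw [hswap, gradient_diagLoss_uP_apply]
  simp only [PiLp.neg_apply, mul_neg, sub_neg_eq_add, neg_add_eq_sub, neg_neg]

theorem gradient_diagLoss_vP_apply (uP uM vP vM : EuclideanSpace ℝ (Fin d)) (i : Fin d) :
    gradient (fun v => diagLoss X y uP uM v vM) vP i =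
      -(residualCorr X y (fun j => uP j * vP j - uM j * vM j) i * uP i) := by
  have hswap : (fun v => diagLoss X y uP uM v vM) = fun v => diagLoss X y v uM uP vM :=
    funext fun v => diagLoss_congr X y fun j => by ring
  rw [hswap, gradient_diagLoss_uP_apply]
  simp only [mul_comm (vP _)]

theorem gradient_diagLoss_vM_apply (uP uM vP vM : EuclideanSpace ℝ (Fin d)) (i : Fin d) :
    gradient (fun v => diagLoss X y uP uM vP v) vM i =
      residualCorr X y (fun j => uP j * vP j - uM j * vM j) i * uM i := by
  have hswap : (fun v => diagLoss X y uP uM vP v) = fun v => diagLoss X y uP v vP uM :=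
    funext fun v => diagLoss_congr X y fun j => by ring
  rw [hswap, gradient_diagLoss_uM_apply]
  simp only [mul_comm (vM _)]

end

theorem HasDerivAt.euclidean_apply {ι : Type*} [Fintype ι] {f : ℝ → EuclideanSpace ℝ ι}
    {f' : EuclideanSpace ℝ ι} {t : ℝ} (hf : HasDerivAt f f' t) (i : ι) :
    HasDerivAt (fun τ => f τ i) (f' i) t :=
  (EuclideanSpace.proj i : EuclideanSpace ℝ ι →L[ℝ] ℝ).hasFDerivAt.comp_hasDerivAt t hf

theorem eq_of_hasDerivAt_zero_of_le {E : Type*} [NormedAddCommGroup E] [NormedSpace ℝ E]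
    {f : ℝ → E} {a t : ℝ} (hf : ∀ s, a ≤ s → HasDerivAt f 0 s) (ht : a ≤ t) : f t = f a :=
  constant_of_has_deriv_right_zero (fun s hs => (hf s hs.1).continuousAt.continuousWithinAt)
    (fun s hs => (hf s hs.1).hasDerivWithinAt) t ⟨ht, le_rfl⟩

section

variable {a b p q : ℝ → ℝ} {k s : ℝ}

theorem HasDerivAt.sq_sub_sq_eq_zero (ha : HasDerivAt a (k * b s) s)
    (hb : HasDerivAt b (k * a s) s) : HasDerivAt (fun τ => b τ ^ 2 - a τ ^ 2) 0 s :=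
  ((hb.fun_pow 2).fun_sub (ha.fun_pow 2)).congr_deriv (by ring)

theorem HasDerivAt.mul_add_mul_eq_zero (ha : HasDerivAt a (k * b s) s)
    (hb : HasDerivAt b (k * a s) s) (hp : HasDerivAt p (-k * q s) s)
    (hq : HasDerivAt q (-k * p s) s) : HasDerivAt (fun τ => a τ * p τ + b τ * q τ) 0 s :=
  ((ha.fun_mul hp).fun_add (hb.fun_mul hq)).congr_deriv (by ring)

end

/-- along any gradient flow of the diagonal linear network loss, the
coordinatewise quantities `u₊ᵢu₋ᵢ + v₊ᵢv₋ᵢ`, `v₊ᵢ² − u₊ᵢ²` and `v₋ᵢ² − u₋ᵢ²` are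
conserved. -/
theorem stmt_1 {d N : ℕ} (X : Fin N → EuclideanSpace ℝ (Fin d)) (y : Fin N → ℝ)
    (uP uM vP vM : ℝ → EuclideanSpace ℝ (Fin d))
    (hflow : ∀ t, 0 ≤ t →
      HasDerivAt uP (-gradient (fun u => diagLoss X y u (uM t) (vP t) (vM t)) (uP t)) t ∧
      HasDerivAt uM (-gradient (fun u => diagLoss X y (uP t) u (vP t) (vM t)) (uM t)) t ∧
      HasDerivAt vP (-gradient (fun v => diagLoss X y (uP t) (uM t) v (vM t)) (vP t)) t ∧
      HasDerivAt vM (-gradient (fun v => diagLoss X y (uP t) (uM t) (vP t) v) (vM t)) t) :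
    ∀ t, 0 ≤ t → ∀ i : Fin d,
      uP t i * uM t i + vP t i * vM t i = uP 0 i * uM 0 i + vP 0 i * vM 0 i ∧
      vP t i ^ 2 - uP t i ^ 2 = vP 0 i ^ 2 - uP 0 i ^ 2 ∧
      vM t i ^ 2 - uM t i ^ 2 = vM 0 i ^ 2 - uM 0 i ^ 2 := by
  intro t ht i
  have hcoord : ∀ s, 0 ≤ s →
      let c := residualCorr X y (fun j => uP s j * vP s j - uM s j * vM s j) i
      HasDerivAt (fun τ => uP τ i) (c * vP s i) s ∧
      HasDerivAt (fun τ => vP τ i) (c * uP s i) s ∧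
      HasDerivAt (fun τ => uM τ i) (-c * vM s i) s ∧
      HasDerivAt (fun τ => vM τ i) (-c * uM s i) s := by
    intro s hs
    obtain ⟨huP, huM, hvP, hvM⟩ := hflow s hs
    refine ⟨?_, ?_, ?_, ?_⟩
    · simpa only [PiLp.neg_apply, gradient_diagLoss_uP_apply, neg_neg] using huP.euclidean_apply i
    · simpa only [PiLp.neg_apply, gradient_diagLoss_vP_apply, neg_neg] using hvP.euclidean_apply i
    · simpa only [PiLp.neg_apply, gradient_diagLoss_uM_apply, neg_mul] using huM.euclidean_apply i
    · simpa only [PiLp.neg_apply, gradient_diagLoss_vM_apply, neg_mul] using hvM.euclidean_apply i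
  have hcross : ∀ s, 0 ≤ s → HasDerivAt (fun τ => uP τ i * uM τ i + vP τ i * vM τ i) 0 s :=
    fun s hs => let ⟨huP, hvP, huM, hvM⟩ := hcoord s hs; huP.mul_add_mul_eq_zero hvP huM hvM
  have hplus : ∀ s, 0 ≤ s → HasDerivAt (fun τ => vP τ i ^ 2 - uP τ i ^ 2) 0 s :=
    fun s hs => let ⟨huP, hvP, _⟩ := hcoord s hs; huP.sq_sub_sq_eq_zero hvP
  have hminus : ∀ s, 0 ≤ s → HasDerivAt (fun τ => vM τ i ^ 2 - uM τ i ^ 2) 0 s :=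
    fun s hs => let ⟨_, _, huM, hvM⟩ := hcoord s hs; huM.sq_sub_sq_eq_zero hvM
  exact ⟨eq_of_hasDerivAt_zero_of_le hcross ht, eq_of_hasDerivAt_zero_of_le hplus ht,
    eq_of_hasDerivAt_zero_of_le hminus ht⟩
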